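/- arXiv:1711.08831 — 4 statements merged into one kernel-verified Lean document; each statement's English description precedes it below -/
import Mathlib

section
/- Let P and Q be orthogonal projections on a finite-dimensional real inner product space and U = (2P − I)(2Q − I). Then a vector z satisfies Uz = z if and only if z lies in the direct sum (col(P) ∩ col(Q)) ⊕ (ker(P) ∩ ker(Q)). -/
open Matrix LinearMap

/-!
Since `2P - 1` is an involution, `(2P - 1)(2Q - 1) z = z` is equivalent to
`(2Q - 1) z = (2P - 1) z`, i.e. to `P z = Q z`. Two idempotents agree exactly on
`(ran P ∩ ran Q) ⊕ (ker P ∩ ker Q)`: if `P z = Q z`, split `z = P z + (z - P z)`.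
-/

theorem IsIdempotentElem.two_mul_sub_one_mul_self {A : Type*} [Ring A] {e : A}
    (he : IsIdempotentElem e) : (2 * e - 1) * (2 * e - 1) = 1 := by
  have h : e * e = e := he
  noncomm_ring
  simp [h]

namespace LinearMap

variable {R M : Type*} [Ring R] [AddCommGroup M] [Module R M] {p q : Module.End R M}

theorem IsIdempotentElem.apply_eq_apply_iff_mem_sup (hp : IsIdempotentElem p)
    (hq : IsIdempotentElem q) {x : M} :
    p x = q x ↔ x ∈ (range p ⊓ range q) ⊔ (ker p ⊓ ker q) := by
  constructor
  · intro hpq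
    have hpp : p (p x) = p x := hp.mem_range_iff.1 (mem_range_self p x)
    have hqq : q (q x) = q x := hq.mem_range_iff.1 (mem_range_self q x)
    refine Submodule.mem_sup.2 ⟨p x, ⟨mem_range_self p x, hpq ▸ mem_range_self q x⟩,
      x - p x, Submodule.mem_inf.2 ⟨?_, ?_⟩, add_sub_cancel _ _⟩
    · rw [mem_ker, map_sub, hpp, sub_self]
    · rw [mem_ker, map_sub, hpq, hqq, sub_self]
  · intro hx
    obtain ⟨u, ⟨hpu, hqu⟩, v, ⟨hpv, hqv⟩, rfl⟩ := Submodule.mem_sup.1 hx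
    rw [map_add, map_add, hp.mem_range_iff.1 hpu, hq.mem_range_iff.1 hqu, mem_ker.1 hpv,
      mem_ker.1 hqv]

variable [IsAddTorsionFree M]

theorem IsIdempotentElem.reflection_mul_reflection_apply_eq_self_iff
    (hp : IsIdempotentElem p) {x : M} :
    ((2 * p - 1) * (2 * q - 1)) x = x ↔ p x = q x := by
  have hinv : ∀ y, (2 * p - 1) ((2 * p - 1) y) = y := fun y => by
    rw [← Module.End.mul_apply, hp.two_mul_sub_one_mul_self, Module.End.one_apply]
  calc ((2 * p - 1) * (2 * q - 1)) x = x
      ↔ (2 * p - 1) ((2 * q - 1) x) = (2 * p - 1) ((2 * p - 1) x) := by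
        rw [Module.End.mul_apply, hinv]
    _ ↔ (2 * q - 1) x = (2 * p - 1) x := (Function.LeftInverse.injective hinv).eq_iff
    _ ↔ 2 • q x = 2 • p x := by
        simp only [sub_apply, Module.End.mul_apply, Module.End.ofNat_apply, Module.End.one_apply,
          sub_left_inj]
    _ ↔ p x = q x := ((nsmul_right_injective two_ne_zero).eq_iff).trans eq_comm

end LinearMap

theorem stmt_3_general {n : ℕ} (P Q : Matrix (Fin n) (Fin n) ℝ)
    (hP2 : P * P = P) (hQ2 : Q * Q = Q)
    (z : Fin n → ℝ) :
    (((2 : ℝ) • P - 1) * ((2 : ℝ) • Q - 1)) *ᵥ z = z ↔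
    z ∈ (LinearMap.range (Matrix.toLin' P) ⊓ LinearMap.range (Matrix.toLin' Q)) ⊔
        (LinearMap.ker (Matrix.toLin' P) ⊓ LinearMap.ker (Matrix.toLin' Q)) := by
  have hp : IsIdempotentElem (toLin' P) := IsIdempotentElem.map hP2 toLinAlgEquiv'
  have hq : IsIdempotentElem (toLin' Q) := IsIdempotentElem.map hQ2 toLinAlgEquiv'
  rw [← hp.apply_eq_apply_iff_mem_sup hq, ← hp.reflection_mul_reflection_apply_eq_self_iff,
    ← toLinAlgEquiv'_apply]
  simp only [two_smul, ← two_mul, map_mul, map_sub, map_ofNat, map_one]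
  rfl

theorem stmt_3 {n : ℕ} (P Q : Matrix (Fin n) (Fin n) ℝ)
    (hP2 : P * P = P) (hPs : Pᵀ = P) (hQ2 : Q * Q = Q) (hQs : Qᵀ = Q)
    (z : Fin n → ℝ) :
    (((2 : ℝ) • P - 1) * ((2 : ℝ) • Q - 1)) *ᵥ z = z ↔
    z ∈ (LinearMap.range (Matrix.toLin' P) ⊓ LinearMap.range (Matrix.toLin' Q)) ⊔
        (LinearMap.ker (Matrix.toLin' P) ⊓ LinearMap.ker (Matrix.toLin' Q)) :=
  stmt_3_general P Q hP2 hQ2 z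
end

section
/- Let P and Q be orthogonal projections on ℝⁿ with U = (2P−I)(2Q−I), and let z = Qz be a unit vector in col(Q) that is an eigenvector of QPQ with eigenvalue μ where 0 < μ < 1. Set θ so that cos θ = 2μ − 1. Then the vector (cos θ + 1)z − (e^{iθ} + 1)Pz is a nonzero eigenvector of U (viewed as a complex matrix) with eigenvalue e^{iθ}. -/
/-!
On the plane spanned by `z` and `w = P z` the reflection `2P - 1` fixes `w` and sends `z` to
`2w - z`, while `2Q - 1` fixes `z` and sends `w` to `2μ z - w` (because `Q w = QPQ z = μ z`).
So `U` acts there by a real 2×2 matrix with trace `2(2μ - 1) = 2 cos θ` and determinant `1`,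
whose eigenvalues are `e^{± iθ}`; the vector `2μ z - (e^{iθ} + 1) w` is an eigenvector for
`e^{iθ}`. It is nonzero because its imaginary part is `-sin θ • w` and `sin θ ≠ 0`.
-/

open Matrix Complex

namespace Matrix

variable {R : Type*} [CommRing R] {ι : Type*} [Fintype ι] [DecidableEq ι]

theorem two_smul_sub_one_mulVec_of_mulVec_eq_self {P : Matrix ι ι R} {v : ι → R}
    (hv : P *ᵥ v = v) : ((2 : R) • P - 1) *ᵥ v = v := by
  rw [sub_mulVec, smul_mulVec, hv, one_mulVec, two_smul, add_sub_cancel_right]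

theorem two_smul_sub_one_mulVec (P : Matrix ι ι R) (v : ι → R) :
    ((2 : R) • P - 1) *ᵥ v = (2 : R) • (P *ᵥ v) - v := by
  rw [sub_mulVec, smul_mulVec, one_mulVec]

variable {P Q : Matrix ι ι R} {z : ι → R} {μ : R}

theorem reflection_mul_reflection_mulVec_left (hzQ : Q *ᵥ z = z) :
    (((2 : R) • P - 1) * ((2 : R) • Q - 1)) *ᵥ z = (2 : R) • (P *ᵥ z) - z := by
  rw [← mulVec_mulVec, two_smul_sub_one_mulVec_of_mulVec_eq_self hzQ, two_smul_sub_one_mulVec]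

theorem reflection_mul_reflection_mulVec_right (hP : P * P = P) (hzP : Q *ᵥ (P *ᵥ z) = μ • z) :
    (((2 : R) • P - 1) * ((2 : R) • Q - 1)) *ᵥ (P *ᵥ z)
      = (4 * μ - 1) • (P *ᵥ z) - (2 * μ) • z := by
  have hPw : P *ᵥ (P *ᵥ z) = P *ᵥ z := by rw [mulVec_mulVec, hP]
  rw [← mulVec_mulVec, two_smul_sub_one_mulVec Q, hzP, mulVec_sub, mulVec_smul, mulVec_smul,
    two_smul_sub_one_mulVec_of_mulVec_eq_self hPw, two_smul_sub_one_mulVec P z]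
  module

theorem reflection_mul_reflection_mulVec_eigenvector (hP : P * P = P) (hzQ : Q *ᵥ z = z)
    (hzP : Q *ᵥ (P *ᵥ z) = μ • z) {e : R} (he : e ^ 2 - 2 * (2 * μ - 1) * e + 1 = 0) :
    (((2 : R) • P - 1) * ((2 : R) • Q - 1)) *ᵥ ((2 * μ) • z - (e + 1) • (P *ᵥ z))
      = e • ((2 * μ) • z - (e + 1) • (P *ᵥ z)) := by
  rw [mulVec_sub, mulVec_smul, mulVec_smul, reflection_mul_reflection_mulVec_left hzQ,
    reflection_mul_reflection_mulVec_right hP hzP]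
  ext i
  simp only [Pi.sub_apply, Pi.smul_apply, smul_eq_mul]
  linear_combination (P *ᵥ z) i * he

end Matrix

theorem Matrix.map_ofReal_reflection_mul_reflection {ι : Type*} [Fintype ι] [DecidableEq ι]
    (P Q : Matrix ι ι ℝ) :
    (((2 : ℝ) • P - 1) * ((2 : ℝ) • Q - 1)).map (fun x => (x : ℂ))
      = ((2 : ℂ) • P.map (↑) - 1) * ((2 : ℂ) • Q.map (↑) - 1) := by
  have h := (ofRealHom.mapMatrix (m := ι)).map_mul ((2 : ℝ) • P - 1) ((2 : ℝ) • Q - 1)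
  simp only [map_sub, map_one, RingHom.mapMatrix_apply] at h
  rw [show (fun x : ℝ => (x : ℂ)) = ⇑ofRealHom from rfl, h]
  simp [Matrix.map_smul']
  rfl

theorem Matrix.map_ofReal_mulVec {ι : Type*} [Fintype ι] (M : Matrix ι ι ℝ) (v : ι → ℝ) :
    M.map (↑) *ᵥ (fun i => (v i : ℂ)) = fun i => ((M *ᵥ v) i : ℂ) :=
  funext fun i => (RingHom.map_mulVec ofRealHom M v i).symm

theorem Complex.exp_mul_I_sq_sub_two_cos_mul_add_one (θ : ℝ) :
    exp (θ * I) ^ 2 - 2 * Real.cos θ * exp (θ * I) + 1 = 0 := by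
  have hinv : exp (θ * I) * exp (-θ * I) = 1 := by rw [← exp_add]; simp
  rw [ofReal_cos, two_cos]
  linear_combination -hinv

theorem ofReal_mul_sub_mul_ne_zero {ι : Type*} {x y : ι → ℝ} (hx : x ≠ 0) {b : ℝ} (hb : b ≠ 0)
    {a : ℂ} (ha : a.im ≠ 0) : (fun i => (b : ℂ) * x i - a * y i) ≠ 0 := by
  intro h
  apply hx
  ext i
  have hi := congrFun h i
  have hy : y i = 0 := by simpa [ha] using congrArg im hi
  simpa [hy, hb] using congrArg re hi

theorem stmt_6_general {n : ℕ} (P Q : Matrix (Fin n) (Fin n) ℝ)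
    (hP2 : P * P = P)
    (z : Fin n → ℝ) (hz : z ≠ 0) (hzQ : Q *ᵥ z = z)
    (μ : ℝ) (hzP : Q *ᵥ (P *ᵥ (Q *ᵥ z)) = μ • z)
    (θ : ℝ) (hθ0 : 0 < θ) (hθπ : θ < Real.pi) (hcos : Real.cos θ = 2 * μ - 1) :
    (fun i => ((Real.cos θ + 1 : ℝ) : ℂ) * (z i : ℂ)
        - (Complex.exp (θ * Complex.I) + 1) * ((P *ᵥ z) i : ℂ)) ≠ 0 ∧
    ((((2 : ℝ) • P - 1) * ((2 : ℝ) • Q - 1)).map (fun x => (x : ℂ))) *ᵥ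
      (fun i => ((Real.cos θ + 1 : ℝ) : ℂ) * (z i : ℂ)
        - (Complex.exp (θ * Complex.I) + 1) * ((P *ᵥ z) i : ℂ))
    = Complex.exp (θ * Complex.I) •
      (fun i => ((Real.cos θ + 1 : ℝ) : ℂ) * (z i : ℂ)
        - (Complex.exp (θ * Complex.I) + 1) * ((P *ᵥ z) i : ℂ)) := by
  rw [hzQ] at hzP
  have hcos1 : Real.cos θ + 1 = 2 * μ := by linarith
  constructor
  · refine ofReal_mul_sub_mul_ne_zero hz ?_ ?_
    · linarith [Real.cos_lt_cos_of_nonneg_of_le_pi hθ0.le le_rfl hθπ, Real.cos_pi]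
    · simpa [exp_ofReal_mul_I_im] using (Real.sin_pos_of_pos_of_lt_pi hθ0 hθπ).ne'
  · have he : exp (θ * I) ^ 2 - 2 * (2 * (μ : ℂ) - 1) * exp (θ * I) + 1 = 0 := by
      have := exp_mul_I_sq_sub_two_cos_mul_add_one θ
      rw [hcos] at this
      exact_mod_cast this
    have hP : P.map (↑) * P.map (↑) = P.map ((↑) : ℝ → ℂ) :=
      (Matrix.map_mul (f := ofRealHom)).symm.trans (congrArg (·.map ofReal) hP2)
    have hzQ' : Q.map (↑) *ᵥ (fun i => (z i : ℂ)) = fun i => (z i : ℂ) := by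
      rw [map_ofReal_mulVec, hzQ]
    have hzP' : Q.map (↑) *ᵥ (P.map (↑) *ᵥ fun i => (z i : ℂ)) = (μ : ℂ) • fun i => (z i : ℂ) := by
      rw [map_ofReal_mulVec, map_ofReal_mulVec, hzP]; ext; simp
    have heig := reflection_mul_reflection_mulVec_eigenvector hP hzQ' hzP' he
    rw [map_ofReal_reflection_mul_reflection]
    convert heig using 2 <;> ext i <;> simp [hcos1, map_ofReal_mulVec]

theorem stmt_6 {n : ℕ} (P Q : Matrix (Fin n) (Fin n) ℝ)
    (hP2 : P * P = P) (hPs : Pᵀ = P) (hQ2 : Q * Q = Q) (hQs : Qᵀ = Q)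
    (z : Fin n → ℝ) (hz : z ≠ 0) (hzQ : Q *ᵥ z = z)
    (μ : ℝ) (hμ0 : 0 < μ) (hμ1 : μ < 1) (hzP : Q *ᵥ (P *ᵥ (Q *ᵥ z)) = μ • z)
    (θ : ℝ) (hθ0 : 0 < θ) (hθπ : θ < Real.pi) (hcos : Real.cos θ = 2 * μ - 1) :
    (fun i => ((Real.cos θ + 1 : ℝ) : ℂ) * (z i : ℂ)
        - (Complex.exp (θ * Complex.I) + 1) * ((P *ᵥ z) i : ℂ)) ≠ 0 ∧
    ((((2 : ℝ) • P - 1) * ((2 : ℝ) • Q - 1)).map (fun x => (x : ℂ))) *ᵥ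
      (fun i => ((Real.cos θ + 1 : ℝ) : ℂ) * (z i : ℂ)
        - (Complex.exp (θ * Complex.I) + 1) * ((P *ᵥ z) i : ℂ))
    = Complex.exp (θ * Complex.I) •
      (fun i => ((Real.cos θ + 1 : ℝ) : ℂ) * (z i : ℂ)
        - (Complex.exp (θ * Complex.I) + 1) * ((P *ᵥ z) i : ℂ)) :=
  stmt_6_general P Q hP2 z hz hzQ μ hzP θ hθ0 hθπ hcos
end

section
/- Let P and Q be orthogonal projections and U = (2P−I)(2Q−I). If z is a unit vector with Qz = z and QPQz = μz for a scalar μ, then the span of {z, Pz} is U-invariant; concretely, Uz = −z + 2Pz and U(Pz) = −2μ z + (4μ − 1) Pz. -/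
/-!
`U = (2P - 1)(2Q - 1)` applies two reflections. Since `Qz = z`, the first fixes `z` and sends `Pz`
to `2QPz - Pz = 2μz - Pz`; expanding the second with `P² = P` gives both formulas.
-/

open Matrix

theorem Matrix.two_smul_sub_one_mulVec_s7 {R ι : Type*} [CommRing R] [Fintype ι] [DecidableEq ι]
    (P : Matrix ι ι R) (v : ι → R) :
    ((2 : R) • P - 1) *ᵥ v = (2 : R) • (P *ᵥ v) - v := by
  rw [sub_mulVec, smul_mulVec, one_mulVec]

theorem Matrix.mulVec_mulVec_of_mul_self {R ι : Type*} [CommRing R] [Fintype ι]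
    {P : Matrix ι ι R} (hP : P * P = P) (v : ι → R) :
    P *ᵥ (P *ᵥ v) = P *ᵥ v := by
  rw [mulVec_mulVec, hP]

theorem stmt_7_general {n : ℕ} (P Q : Matrix (Fin n) (Fin n) ℝ)
    (hP2 : P * P = P)
    (z : Fin n → ℝ) (hzQ : Q *ᵥ z = z)
    (μ : ℝ) (hzP : Q *ᵥ (P *ᵥ (Q *ᵥ z)) = μ • z) :
    (((2 : ℝ) • P - 1) * ((2 : ℝ) • Q - 1)) *ᵥ z = -z + (2 : ℝ) • (P *ᵥ z) ∧
    (((2 : ℝ) • P - 1) * ((2 : ℝ) • Q - 1)) *ᵥ (P *ᵥ z)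
      = (-(2 * μ)) • z + (4 * μ - 1) • (P *ᵥ z) := by
  rw [hzQ] at hzP
  simp only [← mulVec_mulVec, two_smul_sub_one_mulVec_s7, mulVec_sub, mulVec_smul, hzQ, hzP,
    mulVec_mulVec_of_mul_self hP2]
  constructor <;> module

theorem stmt_7 {n : ℕ} (P Q : Matrix (Fin n) (Fin n) ℝ)
    (hP2 : P * P = P) (hPs : Pᵀ = P) (hQ2 : Q * Q = Q) (hQs : Qᵀ = Q)
    (z : Fin n → ℝ) (hunit : z ⬝ᵥ z = 1) (hzQ : Q *ᵥ z = z)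
    (μ : ℝ) (hzP : Q *ᵥ (P *ᵥ (Q *ᵥ z)) = μ • z) :
    (((2 : ℝ) • P - 1) * ((2 : ℝ) • Q - 1)) *ᵥ z = -z + (2 : ℝ) • (P *ᵥ z) ∧
    (((2 : ℝ) • P - 1) * ((2 : ℝ) • Q - 1)) *ᵥ (P *ᵥ z)
      = (-(2 * μ)) • z + (4 * μ - 1) • (P *ᵥ z) :=
  stmt_7_general P Q hP2 z hzQ μ hzP
end

section
/- Let C be a 0-1 incidence matrix with constant row sums d and constant column sums k (C𝟙 = d𝟙, Cᵀ𝟙 = k𝟙), and suppose CCᵀ has exactly two distinct nonzero eigenvalues dk and μ, with the dk-eigenspace spanned by 𝟙. Then CCᵀC = μC + (k(dk−μ)/n)·J, where n is the number of rows of C and J is the all-ones matrix. -/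
/-!
The kernel projection kills `C` from the left: transposing `C Cᵀ E₀ = 0` and using that
`C Cᵀ x = 0` forces `Cᵀ x = 0` gives `E₀ C = 0`. Constant column sums give `J C = k J`.
Multiplying the spectral decomposition of `C Cᵀ` by `C` on the right then leaves
`dk (k/n) J + μ (C - (k/n) J)`.
-/

open Matrix

namespace Matrix

variable {R : Type*} {l m n : Type*} [Fintype m]

theorem of_one_mul_eq_smul_of_transpose_mulVec_one [Semiring R] {C : Matrix m n R} {k : R}
    (hcol : Cᵀ *ᵥ (fun _ => (1 : R)) = k • fun _ => 1) :
    (of fun _ _ => (1 : R) : Matrix l m R) * C = k • of fun _ _ => 1 := by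
  ext i j
  have hj := congrFun hcol j
  simp only [mulVec, dotProduct, transpose_apply, mul_one, Pi.smul_apply, smul_eq_mul] at hj
  simp [mul_apply, hj]

theorem mul_eq_zero_of_mul_transpose_mul_eq_zero [Fintype l] {C : Matrix l m ℝ}
    {E : Matrix l l ℝ} (hE : Eᵀ = E) (hker : C * Cᵀ * E = 0) : E * C = 0 := by
  have hCE : Cᵀ * E = 0 := by
    rw [← conjTranspose_eq_transpose_of_trivial] at hker ⊢
    exact (self_mul_conjTranspose_mul_eq_zero C E).mp hker
  simpa only [transpose_mul, transpose_transpose, hE, transpose_zero] using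
    congrArg transpose hCE

end Matrix

theorem stmt_13_general {n b : ℕ}
    (C : Matrix (Fin n) (Fin b) ℝ) (d k μ : ℝ)
    (hcol : Cᵀ *ᵥ (fun _ => (1 : ℝ)) = k • ((fun _ => 1) : Fin b → ℝ))
    (E₀ : Matrix (Fin n) (Fin n) ℝ)
    (hE₀s : E₀ᵀ = E₀)
    (hker : C * Cᵀ * E₀ = 0)
    (hdecomp : C * Cᵀ
      = (d * k) • ((n : ℝ)⁻¹ • (Matrix.of fun _ _ => (1 : ℝ)))
        + μ • (1 - (n : ℝ)⁻¹ • (Matrix.of fun _ _ => (1 : ℝ)) - E₀)) :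
    C * Cᵀ * C = μ • C + (k * (d * k - μ) / n) • (Matrix.of fun _ _ => (1 : ℝ)) := by
  have hE₀C : E₀ * C = 0 := mul_eq_zero_of_mul_transpose_mul_eq_zero hE₀s hker
  have hJC := of_one_mul_eq_smul_of_transpose_mulVec_one (l := Fin n) hcol
  rw [hdecomp]
  simp only [Matrix.add_mul, Matrix.sub_mul, Matrix.smul_mul, Matrix.one_mul, hE₀C, hJC]
  ext i j
  simp only [Matrix.add_apply, Matrix.sub_apply, Matrix.smul_apply, smul_eq_mul, of_apply,
    Matrix.zero_apply]
  ring

theorem stmt_13 {n b : ℕ} (hn : 0 < n)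
    (C : Matrix (Fin n) (Fin b) ℝ) (d k μ : ℝ)
    (h01 : ∀ i j, C i j = 0 ∨ C i j = 1)
    (hrow : C *ᵥ (fun _ => (1 : ℝ)) = d • ((fun _ => 1) : Fin n → ℝ))
    (hcol : Cᵀ *ᵥ (fun _ => (1 : ℝ)) = k • ((fun _ => 1) : Fin b → ℝ))
    (E₀ : Matrix (Fin n) (Fin n) ℝ)
    (hE₀s : E₀ᵀ = E₀) (hE₀2 : E₀ * E₀ = E₀)
    (hker : C * Cᵀ * E₀ = 0)
    (hμ : μ ≠ d * k)
    (hdecomp : C * Cᵀ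
      = (d * k) • ((n : ℝ)⁻¹ • (Matrix.of fun _ _ => (1 : ℝ)))
        + μ • (1 - (n : ℝ)⁻¹ • (Matrix.of fun _ _ => (1 : ℝ)) - E₀)) :
    C * Cᵀ * C = μ • C + (k * (d * k - μ) / n) • (Matrix.of fun _ _ => (1 : ℝ)) :=
  stmt_13_general C d k μ hcol E₀ hE₀s hker hdecomp
end
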